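/- arXiv:2402.03664 — 3 statements merged into one kernel-verified Lean document; each statement's English description precedes it below -/
import Mathlib

section
/- Suppose a cost function L : ℝ × ℝ → ℝ decomposes as L(r₁,r₂) = f₁(r₁) + f₂(r₂) − h₁(r₁)h₂(r₂), and define the tensor M_{i,j,i',j'} = L(C^X_{i,i'}, C^Y_{j,j'}) from matrices C^X ∈ ℝ^{n×n} and C^Y ∈ ℝ^{m×m}. Then for every γ ∈ ℝ^{n×m}, M∘γ = f₁(C^X)·γ₁·1ₘᵀ + 1ₙ·γ₂ᵀ·f₂(C^Y) − h₁(C^X)·γ·h₂(C^Y)ᵀ, where γ₁ = γ1ₘ, γ₂ = γᵀ1ₙ, and f(C) denotes entrywise application of f to the matrix C. -/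
/-- Tensor-matrix product: `(M ∘ γ)_{ij} = ∑_{i',j'} M_{i,j,i',j'} γ_{i',j'}`. -/
def tmul {n m : ℕ} (M : Fin n → Fin m → Fin n → Fin m → ℝ)
    (γ : Fin n → Fin m → ℝ) : Fin n → Fin m → ℝ :=
  fun i j => ∑ i', ∑ j', M i j i' j' * γ i' j'

section TensorMatrixProduct

variable {n m : ℕ} (γ : Fin n → Fin m → ℝ) (i : Fin n) (j : Fin m)

theorem tmul_add_apply (M N : Fin n → Fin m → Fin n → Fin m → ℝ) :
    tmul (fun i j i' j' => M i j i' j' + N i j i' j') γ i j = tmul M γ i j + tmul N γ i j := by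
  simp only [tmul, add_mul, Finset.sum_add_distrib]

theorem tmul_sub_apply (M N : Fin n → Fin m → Fin n → Fin m → ℝ) :
    tmul (fun i j i' j' => M i j i' j' - N i j i' j') γ i j = tmul M γ i j - tmul N γ i j := by
  simp only [tmul, sub_mul, Finset.sum_sub_distrib]

theorem tmul_left_apply (A : Fin n → Fin n → ℝ) :
    tmul (fun i _ i' _ => A i i') γ i j = ∑ i', A i i' * ∑ j', γ i' j' := by
  simp only [tmul, Finset.mul_sum]

theorem tmul_right_apply (B : Fin m → Fin m → ℝ) :
    tmul (fun _ j _ j' => B j j') γ i j = ∑ j', (∑ i', γ i' j') * B j j' := by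
  simp only [tmul, Finset.sum_mul]
  rw [Finset.sum_comm]
  simp only [mul_comm]

theorem tmul_mul_apply (A : Fin n → Fin n → ℝ) (B : Fin m → Fin m → ℝ) :
    tmul (fun i j i' j' => A i i' * B j j') γ i j = ∑ i', ∑ j', A i i' * γ i' j' * B j j' := by
  simp only [tmul, mul_right_comm]

end TensorMatrixProduct

theorem stmt_6 {n m : ℕ} (f₁ f₂ h₁ h₂ : ℝ → ℝ)
    (CX : Fin n → Fin n → ℝ) (CY : Fin m → Fin m → ℝ)
    (γ : Fin n → Fin m → ℝ) (i : Fin n) (j : Fin m) :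
    tmul (fun i j i' j' => f₁ (CX i i') + f₂ (CY j j') - h₁ (CX i i') * h₂ (CY j j')) γ i j
      = (∑ i', f₁ (CX i i') * (∑ j', γ i' j'))
        + (∑ j', (∑ i', γ i' j') * f₂ (CY j j'))
        - ∑ i', ∑ j', h₁ (CX i i') * γ i' j' * h₂ (CY j j') := by
  rw [tmul_sub_apply, tmul_add_apply, tmul_left_apply, tmul_right_apply, tmul_mul_apply]
end

section
/- Let μ ∈ M₊(X), ν ∈ M₊(Y) be finite nonnegative measures, let X̂ = X ∪ {∞̂}, Ŷ = Y ∪ {∞̂} with an added auxiliary point, and define μ̂ = μ + |ν|δ_∞̂ and ν̂ = ν + |μ|δ_∞̂. Then the map F : Γ≤(μ,ν) → Γ(μ̂,ν̂) given by F(γ) = γ + (μ−γ₁)⊗δ_∞̂ + δ_∞̂⊗(ν−γ₂) + |γ|·δ_(∞̂,∞̂) is a well-defined bijection; that is, F(γ) has marginals exactly μ̂ and ν̂, and every coupling of μ̂ and ν̂ arises as F(γ) for a unique γ ∈ Γ≤(μ,ν). -/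
/-!
Every measure `ρ` on `X̂ × Ŷ` is the sum of its restrictions to `X × Y`, `X × {∞̂}`, `{∞̂} × Y`
and `{(∞̂, ∞̂)}`, i.e. it is glued from its pullbacks along the three embeddings and the mass of
the corner. The marginals of a glued measure are computed piece by piece, and a measure on `X̂`
of the form `m.map inl + a • δ_∞̂` determines `m` and `a`. Hence prescribing the marginals
`μ̂, ν̂` forces the remaining pieces to be `μ - γ₁`, `ν - γ₂` and `|γ|`, where `γ` is the piece on
`X × Y`: this is `F γ`, and `F` is inverted by pulling back along `X × Y ↪ X̂ × Ŷ`.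
-/

open MeasureTheory Set
open scoped ENNReal

lemma MeasurableEmbedding.inl {α β : Type*} [MeasurableSpace α] [MeasurableSpace β] :
    MeasurableEmbedding (Sum.inl : α → α ⊕ β) :=
  ⟨Sum.inl_injective, measurable_inl, fun _ hs => hs.inl_image⟩

lemma MeasurableEmbedding.inr {α β : Type*} [MeasurableSpace α] [MeasurableSpace β] :
    MeasurableEmbedding (Sum.inr : β → α ⊕ β) :=
  ⟨Sum.inr_injective, measurable_inr, fun _ hs => hs.inr_image⟩

lemma compl_range_inl_unit {α : Type*} : (range (Sum.inl : α → α ⊕ Unit))ᶜ = {Sum.inr ()} := by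
  rw [compl_range_inl, range_unique]

namespace MeasureTheory.Measure

variable {α β : Type*} [MeasurableSpace α] [MeasurableSpace β]

lemma map_apply_univ {f : α → β} (hf : Measurable f) (m : Measure α) : m.map f univ = m univ := by
  rw [map_apply hf .univ, preimage_univ]

lemma restrict_prod_add_restrict_prod_compl (ρ : Measure (α × β)) {s : Set α} {t : Set β}
    (hs : MeasurableSet s) (ht : MeasurableSet t) :
    ρ.restrict (s ×ˢ t) + ρ.restrict (s ×ˢ tᶜ) + ρ.restrict (sᶜ ×ˢ t)
      + ρ.restrict (sᶜ ×ˢ tᶜ) = ρ := by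
  have split (ρ' : Measure (α × β)) {u : Set (α × β)} (hu : MeasurableSet u) :
      ρ' = ρ'.restrict u + ρ'.restrict uᶜ := (restrict_add_restrict_compl hu).symm
  calc _ = (ρ.restrict (Prod.snd ⁻¹' t)).restrict (Prod.fst ⁻¹' s)
        + (ρ.restrict (Prod.snd ⁻¹' t)).restrict (Prod.fst ⁻¹' s)ᶜ
        + ((ρ.restrict (Prod.snd ⁻¹' t)ᶜ).restrict (Prod.fst ⁻¹' s)
          + (ρ.restrict (Prod.snd ⁻¹' t)ᶜ).restrict (Prod.fst ⁻¹' s)ᶜ) := by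
        simp only [restrict_restrict (measurable_fst hs), restrict_restrict (measurable_fst hs).compl]
        rw [add_assoc]
        exact add_add_add_comm _ _ _ _
    _ = ρ := by
        rw [← split _ (measurable_fst hs), ← split _ (measurable_fst hs), ← split _ (measurable_snd ht)]

lemma comap_map_eq_zero_of_disjoint {γ : Type*} [MeasurableSpace γ] {f : α → β} {g : γ → β}
    (hf : MeasurableEmbedding f) (hg : Measurable g) (hfg : Disjoint (range f) (range g))
    (m : Measure γ) : (m.map g).comap f = 0 := by
  ext s hs
  rw [hf.comap_apply, map_apply hg (hf.measurableSet_image.mpr hs), coe_zero, Pi.zero_apply]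
  convert measure_empty (μ := m)
  exact eq_empty_of_forall_notMem fun x hx =>
    hfg.notMem_of_mem_left (image_subset_range f s hx) (mem_range_self x)

lemma comap_dirac_eq_zero_of_notMem {f : α → β} (hf : MeasurableEmbedding f) {b : β}
    (hb : b ∉ range f) : (dirac b).comap f = 0 := by
  ext s hs
  rw [hf.comap_apply, dirac_apply' _ (hf.measurableSet_image.mpr hs),
    indicator_of_notMem (fun h => hb (image_subset_range f s h)), coe_zero, Pi.zero_apply]

lemma map_inl_add_smul_dirac_inr_inj [MeasurableSingletonClass β] {m m' : Measure α}
    {a a' : ℝ≥0∞} (b : β) :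
    m.map Sum.inl + a • dirac (Sum.inr b) = m'.map Sum.inl + a' • dirac (Sum.inr b) ↔
      m = m' ∧ a = a' := by
  refine ⟨fun h => ⟨?_, ?_⟩, fun ⟨hm, ha⟩ => hm ▸ ha ▸ rfl⟩
  · simpa [MeasurableEmbedding.inl.comap_add, MeasurableEmbedding.inl.comap_map, comap_smul,
      comap_dirac_eq_zero_of_notMem MeasurableEmbedding.inl] using congrArg (comap Sum.inl) h
  · simpa [map_apply measurable_inl (measurableSet_singleton b).inr_image, preimage_inl_image_inr,
      dirac_apply_of_mem (mem_image_of_mem Sum.inr (mem_singleton b)), -image_singleton]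
      using congrArg (· (Sum.inr '' {b})) h

end MeasureTheory.Measure

namespace PartialTransport

open Measure

variable {X Y : Type*} [MeasurableSpace X] [MeasurableSpace Y]

/-- The map `F` of the theorem is `γ ↦ glue γ (μ - γ₁) (ν - γ₂) (γ univ)`. -/
noncomputable def glue (γ : Measure (X × Y)) (α : Measure X) (β : Measure Y) (c : ℝ≥0∞) :
    Measure ((X ⊕ Unit) × (Y ⊕ Unit)) :=
  γ.map (Prod.map Sum.inl Sum.inl) + α.map (fun x => (Sum.inl x, Sum.inr ()))
    + β.map (fun y => (Sum.inr (), Sum.inl y)) + c • dirac (Sum.inr (), Sum.inr ())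

lemma measurableEmbedding_inl_inl :
    MeasurableEmbedding (Prod.map Sum.inl Sum.inl : X × Y → (X ⊕ Unit) × (Y ⊕ Unit)) :=
  MeasurableEmbedding.inl.prodMap .inl

lemma measurableEmbedding_inl_inr :
    MeasurableEmbedding (fun x => (Sum.inl x, Sum.inr ()) : X → (X ⊕ Unit) × (Y ⊕ Unit)) :=
  (MeasurableEmbedding.inl.prodMap .inr).comp (measurableEmbedding_prod_mk_right ())

lemma measurableEmbedding_inr_inl :
    MeasurableEmbedding (fun y => (Sum.inr (), Sum.inl y) : Y → (X ⊕ Unit) × (Y ⊕ Unit)) :=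
  (MeasurableEmbedding.inr.prodMap .inl).comp (measurableEmbedding_prodMk_left ())

lemma glue_comap (ρ : Measure ((X ⊕ Unit) × (Y ⊕ Unit))) :
    glue (ρ.comap (Prod.map Sum.inl Sum.inl)) (ρ.comap fun x => (Sum.inl x, Sum.inr ()))
      (ρ.comap fun y => (Sum.inr (), Sum.inl y)) (ρ {(Sum.inr (), Sum.inr ())}) = ρ := by
  have h := restrict_prod_add_restrict_prod_compl ρ measurableSet_range_inl measurableSet_range_inl
  rw [compl_range_inl_unit, compl_range_inl_unit, singleton_prod_singleton] at h
  rw [glue, measurableEmbedding_inl_inl.map_comap, measurableEmbedding_inl_inr.map_comap,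
    measurableEmbedding_inr_inl.map_comap, ← restrict_singleton]
  convert h using 5
  · exact range_prodMap
  · ext ⟨a, b⟩; simp [eq_comm]
  · ext ⟨a, b⟩; simp [eq_comm]

lemma comap_glue (γ : Measure (X × Y)) (α : Measure X) (β : Measure Y) (c : ℝ≥0∞) :
    (glue γ α β c).comap (Prod.map Sum.inl Sum.inl) = γ := by
  have hι := measurableEmbedding_inl_inl (X := X) (Y := Y)
  rw [glue, hι.comap_add, hι.comap_add, hι.comap_add, hι.comap_map, comap_smul,
    comap_map_eq_zero_of_disjoint hι measurableEmbedding_inl_inr.measurable,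
    comap_map_eq_zero_of_disjoint hι measurableEmbedding_inr_inl.measurable,
    comap_dirac_eq_zero_of_notMem hι (by simp), smul_zero, add_zero, add_zero, add_zero]
  all_goals
    rw [disjoint_left]
    rintro _ ⟨_, rfl⟩ ⟨_, h⟩
    simp [Prod.ext_iff] at h

lemma map_fst_glue (γ : Measure (X × Y)) (α : Measure X) (β : Measure Y) (c : ℝ≥0∞) :
    (glue γ α β c).map Prod.fst
      = (γ.map Prod.fst + α).map Sum.inl + (β univ + c) • dirac (Sum.inr ()) := by
  rw [glue, Measure.map_add _ _ measurable_fst, Measure.map_add _ _ measurable_fst,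
    Measure.map_add _ _ measurable_fst, Measure.map_smul, map_dirac' measurable_fst,
    map_map measurable_fst measurableEmbedding_inl_inl.measurable,
    map_map measurable_fst measurableEmbedding_inl_inr.measurable,
    map_map measurable_fst measurableEmbedding_inr_inl.measurable]
  change map (Sum.inl ∘ Prod.fst) γ + map Sum.inl α + map (fun _ => Sum.inr ()) β
    + c • dirac (Sum.inr ()) = _
  rw [← map_map measurable_inl measurable_fst, Measure.map_const, Measure.map_add _ _ measurable_inl,
    add_smul]
  abel

lemma map_snd_glue (γ : Measure (X × Y)) (α : Measure X) (β : Measure Y) (c : ℝ≥0∞) :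
    (glue γ α β c).map Prod.snd
      = (γ.map Prod.snd + β).map Sum.inl + (α univ + c) • dirac (Sum.inr ()) := by
  rw [glue, Measure.map_add _ _ measurable_snd, Measure.map_add _ _ measurable_snd,
    Measure.map_add _ _ measurable_snd, Measure.map_smul, map_dirac' measurable_snd,
    map_map measurable_snd measurableEmbedding_inl_inl.measurable,
    map_map measurable_snd measurableEmbedding_inl_inr.measurable,
    map_map measurable_snd measurableEmbedding_inr_inl.measurable]
  change map (Sum.inl ∘ Prod.snd) γ + map (fun _ => Sum.inr ()) α + map Sum.inl β
    + c • dirac (Sum.inr ()) = _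
  rw [← map_map measurable_inl measurable_snd, Measure.map_const, Measure.map_add _ _ measurable_inl,
    add_smul]
  abel

variable {μ : Measure X} {ν : Measure Y} [IsFiniteMeasure μ] [IsFiniteMeasure ν]

lemma map_glue_sub_of_le {γ : Measure (X × Y)} (h1 : γ.map Prod.fst ≤ μ)
    (h2 : γ.map Prod.snd ≤ ν) :
    (glue γ (μ - γ.map Prod.fst) (ν - γ.map Prod.snd) (γ univ)).map Prod.fst
        = μ.map Sum.inl + ν univ • dirac (Sum.inr ()) ∧
      (glue γ (μ - γ.map Prod.fst) (ν - γ.map Prod.snd) (γ univ)).map Prod.snd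
        = ν.map Sum.inl + μ univ • dirac (Sum.inr ()) := by
  have := isFiniteMeasure_of_le μ h1
  have := isFiniteMeasure_of_le ν h2
  constructor
  · rw [map_fst_glue, add_comm (γ.map Prod.fst), sub_add_cancel_of_le h1,
      ← map_apply_univ measurable_snd γ, ← Measure.add_apply, sub_add_cancel_of_le h2]
  · rw [map_snd_glue, add_comm (γ.map Prod.snd), sub_add_cancel_of_le h2,
      ← map_apply_univ measurable_fst γ, ← Measure.add_apply, sub_add_cancel_of_le h1]

lemma le_and_eq_glue_sub_of_map_glue {γ : Measure (X × Y)} {α : Measure X} {β : Measure Y}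
    {c : ℝ≥0∞} (hμ : (glue γ α β c).map Prod.fst = μ.map Sum.inl + ν univ • dirac (Sum.inr ()))
    (hν : (glue γ α β c).map Prod.snd = ν.map Sum.inl + μ univ • dirac (Sum.inr ())) :
    (γ.map Prod.fst ≤ μ ∧ γ.map Prod.snd ≤ ν) ∧
      glue γ α β c = glue γ (μ - γ.map Prod.fst) (ν - γ.map Prod.snd) (γ univ) := by
  rw [map_fst_glue, map_inl_add_smul_dirac_inr_inj] at hμ
  rw [map_snd_glue, map_inl_add_smul_dirac_inr_inj] at hν
  obtain ⟨hγα, -⟩ := hμ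
  obtain ⟨hγβ, hαc⟩ := hν
  have h1 : γ.map Prod.fst ≤ μ := hγα ▸ Measure.le_add_right le_rfl
  have h2 : γ.map Prod.snd ≤ ν := hγβ ▸ Measure.le_add_right le_rfl
  have := isFiniteMeasure_of_le μ h1
  have := isFiniteMeasure_of_le ν h2
  have hα : α = μ - γ.map Prod.fst := by rw [← hγα, add_comm, Measure.add_sub_cancel]
  have hβ : β = ν - γ.map Prod.snd := by rw [← hγβ, add_comm, Measure.add_sub_cancel]
  have hα_ne_top : α univ ≠ ∞ := hα ▸ measure_ne_top _ _
  have hc : c = γ univ := by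
    refine (ENNReal.add_right_inj hα_ne_top).1 ?_
    rw [hαc, ← hγα, Measure.add_apply, map_apply_univ measurable_fst, add_comm]
  exact ⟨⟨h1, h2⟩, by rw [← hα, ← hβ, ← hc]⟩

end PartialTransport

/-- Caffarelli–McCann's correspondence: the map `F` sending a partial plan
`γ ∈ Γ≤(μ,ν)` to `γ + (μ-γ₁)⊗δ_∞̂ + δ_∞̂⊗(ν-γ₂) + |γ|δ_(∞̂,∞̂)` is a bijection onto
the couplings of `μ̂ = μ + |ν|δ_∞̂` and `ν̂ = ν + |μ|δ_∞̂`.  The auxiliary point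
`∞̂` is modeled by `Sum.inr () : X ⊕ Unit`. -/
theorem stmt_17 {X Y : Type*} [MeasurableSpace X] [MeasurableSpace Y]
    (μ : Measure X) (ν : Measure Y) [IsFiniteMeasure μ] [IsFiniteMeasure ν] :
    let infX : X ⊕ Unit := Sum.inr ()
    let infY : Y ⊕ Unit := Sum.inr ()
    let μhat : Measure (X ⊕ Unit) := μ.map Sum.inl + (ν Set.univ) • Measure.dirac infX
    let νhat : Measure (Y ⊕ Unit) := ν.map Sum.inl + (μ Set.univ) • Measure.dirac infY
    let F : Measure (X × Y) → Measure ((X ⊕ Unit) × (Y ⊕ Unit)) := fun γ =>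
      γ.map (Prod.map Sum.inl Sum.inl)
        + (μ - γ.map Prod.fst).map (fun x => (Sum.inl x, infY))
        + (ν - γ.map Prod.snd).map (fun y => (infX, Sum.inl y))
        + (γ Set.univ) • Measure.dirac (infX, infY)
    (∀ γ : Measure (X × Y), γ.map Prod.fst ≤ μ → γ.map Prod.snd ≤ ν →
      ((F γ).map Prod.fst = μhat ∧ (F γ).map Prod.snd = νhat)) ∧
    (∀ γhat : Measure ((X ⊕ Unit) × (Y ⊕ Unit)),
      γhat.map Prod.fst = μhat → γhat.map Prod.snd = νhat →
      ∃! γ : Measure (X × Y),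
        (γ.map Prod.fst ≤ μ ∧ γ.map Prod.snd ≤ ν) ∧ F γ = γhat) := by
  intro infX infY μhat νhat F
  refine ⟨fun γ h1 h2 => PartialTransport.map_glue_sub_of_le h1 h2, fun γhat hμ hν => ?_⟩
  rw [← PartialTransport.glue_comap γhat] at hμ hν
  obtain ⟨hle, hF⟩ := PartialTransport.le_and_eq_glue_sub_of_map_glue hμ hν
  refine ⟨γhat.comap (Prod.map Sum.inl Sum.inl),
    ⟨hle, hF.symm.trans (PartialTransport.glue_comap γhat)⟩, ?_⟩
  rintro γ ⟨-, rfl⟩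
  exact (PartialTransport.comap_glue _ _ _ _).symm
end

section
/- In the discrete setting, let p ∈ ℝ₊ⁿ, q ∈ ℝ₊ᵐ, p̂ = [p; |q|] ∈ ℝ^{n+1}, q̂ = [q; |p|] ∈ ℝ^{m+1}. For γ ∈ Γ≤(p,q), define γ̂ ∈ ℝ₊^{(n+1)×(m+1)} by γ̂[1:n,1:m] = γ, γ̂_{i,m+1} = pᵢ − (γ1ₘ)ᵢ for i ≤ n, γ̂_{n+1,j} = qⱼ − (γᵀ1ₙ)ⱼ for j ≤ m, and γ̂_{n+1,m+1} = |γ|. Then γ̂ ∈ Γ(p̂,q̂), i.e., γ̂1_{m+1} = p̂ and γ̂ᵀ1_{n+1} = q̂, and moreover for the extended tensor M̂ (equal to M̃ = M − 2λ on the original indices and 0 elsewhere) the objectives agree: ⟨M̂∘γ̂, γ̂⟩_F = ⟨M̃∘γ, γ⟩_F. -/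
/-!
The border of `γ̂` is exactly what each row and column of `γ` lacks to reach its marginal, so the
first `n` rows of `γ̂` sum to `p`, and the last one to `|q| - |γ| + |γ| = |q|`; symmetrically for
the columns. Since `M̂` vanishes as soon as one index lies on the border, only the block `γ` of
`γ̂` enters the objective.
-/

open Finset

namespace PartialTransport

variable {R : Type*} {n m : ℕ}

/-- The plan `γ̂` of the paper: the deficits `p - γ 1` and `q - γᵀ 1` fill the last column and row. -/
def completePlan [AddCommGroup R] (p : Fin n → R) (q : Fin m → R) (γ : Fin n → Fin m → R) :
    Fin (n + 1) → Fin (m + 1) → R := fun i j =>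
  if hi : (i : ℕ) < n then
    (if hj : (j : ℕ) < m then γ ⟨i, hi⟩ ⟨j, hj⟩
     else p ⟨i, hi⟩ - ∑ j', γ ⟨i, hi⟩ j')
  else
    (if hj : (j : ℕ) < m then q ⟨j, hj⟩ - ∑ i', γ i' ⟨j, hj⟩
     else ∑ i', ∑ j', γ i' j')

section completePlan

variable [AddCommGroup R] (p : Fin n → R) (q : Fin m → R) (γ : Fin n → Fin m → R)

@[simp]
theorem completePlan_castSucc_castSucc (i : Fin n) (j : Fin m) :
    completePlan p q γ i.castSucc j.castSucc = γ i j := by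
  simp [completePlan]

@[simp]
theorem completePlan_castSucc_last (i : Fin n) :
    completePlan p q γ i.castSucc (Fin.last m) = p i - ∑ j, γ i j := by
  simp [completePlan]

@[simp]
theorem completePlan_last_castSucc (j : Fin m) :
    completePlan p q γ (Fin.last n) j.castSucc = q j - ∑ i, γ i j := by
  simp [completePlan]

@[simp]
theorem completePlan_last_last :
    completePlan p q γ (Fin.last n) (Fin.last m) = ∑ i, ∑ j, γ i j := by
  simp [completePlan]

theorem sum_completePlan_row (i : Fin (n + 1)) :
    ∑ j, completePlan p q γ i j = Fin.snoc (α := fun _ ↦ R) p (∑ j, q j) i := by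
  induction i using Fin.lastCases with
  | cast i => simp [Fin.sum_univ_castSucc]
  | last =>
    rw [Fin.sum_univ_castSucc]
    simp [sum_sub_distrib, sum_comm (f := γ)]

theorem sum_completePlan_col (j : Fin (m + 1)) :
    ∑ i, completePlan p q γ i j = Fin.snoc (α := fun _ ↦ R) q (∑ i, p i) j := by
  induction j using Fin.lastCases with
  | cast j => simp [Fin.sum_univ_castSucc]
  | last =>
    rw [Fin.sum_univ_castSucc]
    simp [sum_sub_distrib]

theorem completePlan_nonneg [PartialOrder R] [IsOrderedAddMonoid R] (hγ : ∀ i j, 0 ≤ γ i j)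
    (hrow : ∀ i, ∑ j, γ i j ≤ p i) (hcol : ∀ j, ∑ i, γ i j ≤ q j) (i : Fin (n + 1))
    (j : Fin (m + 1)) : 0 ≤ completePlan p q γ i j := by
  induction i using Fin.lastCases <;> induction j using Fin.lastCases <;>
    simp [hγ, hrow, hcol, sum_nonneg, sub_nonneg]

end completePlan

/-- The Gromov–Wasserstein objective `⟨T ∘ G, G⟩_F`. -/
def gwCost {ι κ : Type*} [Fintype ι] [Fintype κ] [NonUnitalNonAssocSemiring R]
    (T : ι → κ → ι → κ → R) (G : ι → κ → R) : R :=
  ∑ i, ∑ j, ∑ i', ∑ j', T i j i' j' * G i j * G i' j'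

def padTensor [Zero R] (T : Fin n → Fin m → Fin n → Fin m → R) :
    Fin (n + 1) → Fin (m + 1) → Fin (n + 1) → Fin (m + 1) → R := fun i j i' j' =>
  if hi : (i : ℕ) < n then
    if hj : (j : ℕ) < m then
      if hi' : (i' : ℕ) < n then
        if hj' : (j' : ℕ) < m then T ⟨i, hi⟩ ⟨j, hj⟩ ⟨i', hi'⟩ ⟨j', hj'⟩
        else 0
      else 0
    else 0
  else 0

theorem gwCost_padTensor [NonUnitalNonAssocSemiring R] (T : Fin n → Fin m → Fin n → Fin m → R)
    (G : Fin (n + 1) → Fin (m + 1) → R) :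
    gwCost (padTensor T) G = gwCost T fun i j => G i.castSucc j.castSucc := by
  simp [gwCost, padTensor, Fin.sum_univ_castSucc]

theorem gwCost_padTensor_completePlan [NonUnitalNonAssocRing R]
    (T : Fin n → Fin m → Fin n → Fin m → R) (p : Fin n → R) (q : Fin m → R)
    (γ : Fin n → Fin m → R) : gwCost (padTensor T) (completePlan p q γ) = gwCost T γ := by
  simp only [gwCost_padTensor, completePlan_castSucc_castSucc]

end PartialTransport

theorem stmt_18 {n m : ℕ} (p : Fin n → ℝ) (q : Fin m → ℝ)
    (M : Fin n → Fin m → Fin n → Fin m → ℝ) (lam : ℝ)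
    (γ : Fin n → Fin m → ℝ) (hpos : ∀ i j, 0 ≤ γ i j)
    (h1 : ∀ i, ∑ j, γ i j ≤ p i) (h2 : ∀ j, ∑ i, γ i j ≤ q j) :
    let phat : Fin (n + 1) → ℝ := fun i =>
      if h : (i : ℕ) < n then p ⟨i, h⟩ else ∑ j, q j
    let qhat : Fin (m + 1) → ℝ := fun j =>
      if h : (j : ℕ) < m then q ⟨j, h⟩ else ∑ i, p i
    let γhat : Fin (n + 1) → Fin (m + 1) → ℝ := fun i j =>
      if hi : (i : ℕ) < n then
        (if hj : (j : ℕ) < m then γ ⟨i, hi⟩ ⟨j, hj⟩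
         else p ⟨i, hi⟩ - ∑ j', γ ⟨i, hi⟩ j')
      else
        (if hj : (j : ℕ) < m then q ⟨j, hj⟩ - ∑ i', γ i' ⟨j, hj⟩
         else ∑ i', ∑ j', γ i' j')
    let Mhat : Fin (n + 1) → Fin (m + 1) → Fin (n + 1) → Fin (m + 1) → ℝ :=
      fun i j i' j' =>
        if hi : (i : ℕ) < n then
          if hj : (j : ℕ) < m then
            if hi' : (i' : ℕ) < n then
              if hj' : (j' : ℕ) < m then
                M ⟨i, hi⟩ ⟨j, hj⟩ ⟨i', hi'⟩ ⟨j', hj'⟩ - 2 * lam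
              else 0
            else 0
          else 0
        else 0
    (∀ i j, 0 ≤ γhat i j) ∧
    (∀ i, ∑ j, γhat i j = phat i) ∧ (∀ j, ∑ i, γhat i j = qhat j) ∧
    (∑ i, ∑ j, ∑ i', ∑ j', Mhat i j i' j' * γhat i j * γhat i' j'
      = ∑ i, ∑ j, ∑ i', ∑ j', (M i j i' j' - 2 * lam) * γ i j * γ i' j') := by
  intro phat qhat γhat Mhat
  -- The let-bound objects unfold to `Fin.snoc p |q|`, `Fin.snoc q |p|`, `completePlan p q γ` and
  -- `padTensor (M - 2 lam)`, so the lemmas apply up to definitional unfolding.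
  exact ⟨PartialTransport.completePlan_nonneg p q γ hpos h1 h2,
    PartialTransport.sum_completePlan_row p q γ, PartialTransport.sum_completePlan_col p q γ,
    PartialTransport.gwCost_padTensor_completePlan (fun i j i' j' => M i j i' j' - 2 * lam) p q γ⟩
end
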